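/- For the two-phase QW example, C + ∫_{−1/√2}^{1/√2} w(x) f_K(x;1/√2) dx = 1 where C = 2/5 and w(x) = 2(1−x³+x²−x)/(x²+4): i.e., 2/5 + ∫_{−1/√2}^{1/√2} 2(1−x³+x²−x)/((x²+4)·√2·π(1−x²)√(1/2−x²)) dx = 1. -/

import Mathlib

/-!
With `a = 1/√2`, the factorisation `1 - x³ + x² - x = (1 - x)(1 + x²)` and partial fractions give
`w(x) / (1 - x²) = (4/5) / (1 + x) + (6/5) x / (x² + 4) - (6/5) / (x² + 4)`. Against the arcsine
weight `1/√(a² - x²)` on `[-a, a]` the odd middle term integrates to zero, and the other two have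
arcsine antiderivatives, which are `±π/2` at the endpoints:
`∫ 1/((c + x)√(a² - x²)) = π/√(c² - a²)` and `∫ 1/((x² + b²)√(a² - x²)) = π/(b√(a² + b²))`.
With `c = 1`, `b = 2` the continuous part has mass `4/5 - 1/5 = 3/5`.
-/

open Real Set MeasureTheory intervalIntegral

theorem HasDerivAt.arcsin {f : ℝ → ℝ} {f' x : ℝ} (hf : HasDerivAt f f' x) (h₁ : f x ≠ -1)
    (h₂ : f x ≠ 1) : HasDerivAt (fun y => arcsin (f y)) (1 / √(1 - f x ^ 2) * f') x :=
  (Real.hasDerivAt_arcsin h₁ h₂).comp x hf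

theorem integral_eq_sub_of_hasDerivAt_of_nonneg {f f' : ℝ → ℝ} {a b : ℝ} (hab : a ≤ b)
    (hcont : ContinuousOn f (Icc a b)) (hderiv : ∀ x ∈ Ioo a b, HasDerivAt f (f' x) x)
    (hpos : ∀ x ∈ Ioo a b, 0 ≤ f' x) :
    IntervalIntegrable f' volume a b ∧ ∫ y in a..b, f' y = f b - f a := by
  have hint : IntervalIntegrable f' volume a b :=
    (intervalIntegrable_iff_integrableOn_Ioc_of_le hab).2
      (integrableOn_deriv_of_nonneg hcont hderiv hpos)
  exact ⟨hint, integral_eq_sub_of_hasDerivAt_of_le hab hcont hderiv hint⟩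

theorem Function.Odd.intervalIntegral_eq_zero {E : Type*} [NormedAddCommGroup E] [NormedSpace ℝ E]
    {f : ℝ → E} (hf : Function.Odd f) (a : ℝ) : ∫ x in -a..a, f x = 0 := by
  have h := integral_comp_neg (a := -a) (b := a) f
  simp only [hf _, intervalIntegral.integral_neg, neg_neg] at h
  have h2 : (2 : ℝ) • ∫ x in -a..a, f x = 0 := by
    rw [two_smul]
    nth_rewrite 1 [← h]
    exact neg_add_cancel _
  exact (smul_eq_zero.1 h2).resolve_left two_ne_zero

theorem ne_neg_one_and_ne_one_of_one_sub_sq_eq_sq {y r : ℝ} (hr : 0 < r) (h : 1 - y ^ 2 = r ^ 2) :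
    y ≠ -1 ∧ y ≠ 1 := by
  constructor <;> rintro rfl <;> nlinarith

theorem hasDerivAt_arcsin_div_mul_add {a c x : ℝ} (ha : 0 < a) (hac : a < c)
    (hx : x ∈ Ioo (-a) a) :
    HasDerivAt (fun y => arcsin ((a ^ 2 + c * y) / (a * (c + y))))
      (√(c ^ 2 - a ^ 2) / ((c + x) * √(a ^ 2 - x ^ 2))) x := by
  obtain ⟨hxl, hxr⟩ := hx
  have hcx : 0 < c + x := by linarith
  have hc : 0 < c ^ 2 - a ^ 2 := by nlinarith
  have hax : 0 < a ^ 2 - x ^ 2 := by nlinarith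
  set y := (a ^ 2 + c * x) / (a * (c + x))
  set r := √(c ^ 2 - a ^ 2) * √(a ^ 2 - x ^ 2) / (a * (c + x))
  have hr : 0 < r := by positivity
  have hy : 1 - y ^ 2 = r ^ 2 := by
    simp only [y, r, div_pow, mul_pow, sq_sqrt hc.le, sq_sqrt hax.le]
    field_simp
    ring
  have hinner : HasDerivAt (fun y => (a ^ 2 + c * y) / (a * (c + y)))
      ((c * (a * (c + x)) - (a ^ 2 + c * x) * a) / (a * (c + x)) ^ 2) x := by
    have hnum : HasDerivAt (fun y => a ^ 2 + c * y) c x := by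
      simpa using ((hasDerivAt_id x).const_mul c).const_add (a ^ 2)
    have hden : HasDerivAt (fun y => a * (c + y)) a x := by
      simpa using ((hasDerivAt_id x).const_add c).const_mul a
    exact hnum.div hden (by positivity)
  obtain ⟨hy₁, hy₂⟩ := ne_neg_one_and_ne_one_of_one_sub_sq_eq_sq hr hy
  convert hinner.arcsin hy₁ hy₂ using 1
  rw [hy, sqrt_sq hr.le]
  simp only [r]
  field_simp
  rw [sq_sqrt hc.le]
  ring

theorem hasDerivAt_arcsin_mul_div_sqrt {a b x : ℝ} (ha : 0 < a) (hb : 0 < b)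
    (hx : x ∈ Ioo (-a) a) :
    HasDerivAt (fun y => arcsin (√(a ^ 2 + b ^ 2) * y / (a * √(y ^ 2 + b ^ 2))))
      (b * √(a ^ 2 + b ^ 2) / ((x ^ 2 + b ^ 2) * √(a ^ 2 - x ^ 2))) x := by
  obtain ⟨hxl, hxr⟩ := hx
  have hax : 0 < a ^ 2 - x ^ 2 := by nlinarith
  have hxb : 0 < x ^ 2 + b ^ 2 := by positivity
  set y := √(a ^ 2 + b ^ 2) * x / (a * √(x ^ 2 + b ^ 2))
  set r := b * √(a ^ 2 - x ^ 2) / (a * √(x ^ 2 + b ^ 2))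
  have hr : 0 < r := by positivity
  have hy : 1 - y ^ 2 = r ^ 2 := by
    simp only [y, r, div_pow, mul_pow, sq_sqrt hax.le, sq_sqrt hxb.le,
      sq_sqrt (by positivity : (0 : ℝ) ≤ a ^ 2 + b ^ 2)]
    field_simp
    ring
  have hsqrt : HasDerivAt (fun y => √(y ^ 2 + b ^ 2)) (2 * x / (2 * √(x ^ 2 + b ^ 2))) x := by
    simpa using ((hasDerivAt_pow 2 x).add_const (b ^ 2)).sqrt hxb.ne'
  have hinner : HasDerivAt (fun y => √(a ^ 2 + b ^ 2) * y / (a * √(y ^ 2 + b ^ 2)))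
      ((√(a ^ 2 + b ^ 2) * (a * √(x ^ 2 + b ^ 2)) -
        √(a ^ 2 + b ^ 2) * x * (a * (2 * x / (2 * √(x ^ 2 + b ^ 2))))) /
        (a * √(x ^ 2 + b ^ 2)) ^ 2) x := by
    have hnum : HasDerivAt (fun y => √(a ^ 2 + b ^ 2) * y) √(a ^ 2 + b ^ 2) x := by
      simpa using (hasDerivAt_id x).const_mul √(a ^ 2 + b ^ 2)
    exact hnum.div (hsqrt.const_mul a) (by positivity)
  obtain ⟨hy₁, hy₂⟩ := ne_neg_one_and_ne_one_of_one_sub_sq_eq_sq hr hy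
  convert hinner.arcsin hy₁ hy₂ using 1
  rw [hy, sqrt_sq hr.le]
  simp only [r]
  field_simp
  rw [sq_sqrt hxb.le]
  ring

theorem integral_one_div_add_mul_sqrt_sq_sub_sq {a c : ℝ} (ha : 0 < a) (hac : a < c) :
    IntervalIntegrable (fun x => 1 / ((c + x) * √(a ^ 2 - x ^ 2))) volume (-a) a ∧
      ∫ x in -a..a, 1 / ((c + x) * √(a ^ 2 - x ^ 2)) = π / √(c ^ 2 - a ^ 2) := by
  have hc : 0 < √(c ^ 2 - a ^ 2) := sqrt_pos.2 (by nlinarith)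
  have hcont : ContinuousOn (fun y => arcsin ((a ^ 2 + c * y) / (a * (c + y))) / √(c ^ 2 - a ^ 2))
      (Icc (-a) a) := by
    refine (continuous_arcsin.comp_continuousOn ?_).div_const _
    refine ContinuousOn.div (by fun_prop) (by fun_prop) fun y hy => ?_
    have : 0 < c + y := by linarith [hy.1]
    positivity
  have hderiv : ∀ x ∈ Ioo (-a) a, HasDerivAt
      (fun y => arcsin ((a ^ 2 + c * y) / (a * (c + y))) / √(c ^ 2 - a ^ 2))
      (1 / ((c + x) * √(a ^ 2 - x ^ 2))) x := fun x hx =>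
    ((hasDerivAt_arcsin_div_mul_add ha hac hx).div_const _).congr_deriv
      (by rw [div_right_comm, div_self hc.ne'])
  have hpos : ∀ x ∈ Ioo (-a) a, 0 ≤ 1 / ((c + x) * √(a ^ 2 - x ^ 2)) := fun x hx => by
    have : 0 < c + x := by linarith [hx.1]
    positivity
  refine (integral_eq_sub_of_hasDerivAt_of_nonneg (by linarith) hcont hderiv hpos).imp_right
    fun h => h.trans ?_
  have h₁ : (a ^ 2 + c * a) / (a * (c + a)) = 1 := by
    rw [div_eq_one_iff_eq (mul_pos ha (by linarith)).ne']; ring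
  have h₂ : (a ^ 2 + c * -a) / (a * (c + -a)) = -1 := by
    rw [div_eq_iff (mul_pos ha (by linarith)).ne']; ring
  rw [h₁, h₂, arcsin_one, arcsin_neg_one]
  ring

theorem integral_one_div_sq_add_sq_mul_sqrt_sq_sub_sq {a b : ℝ} (ha : 0 < a) (hb : 0 < b) :
    IntervalIntegrable (fun x => 1 / ((x ^ 2 + b ^ 2) * √(a ^ 2 - x ^ 2))) volume (-a) a ∧
      ∫ x in -a..a, 1 / ((x ^ 2 + b ^ 2) * √(a ^ 2 - x ^ 2)) = π / (b * √(a ^ 2 + b ^ 2)) := by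
  have hab : 0 < √(a ^ 2 + b ^ 2) := sqrt_pos.2 (by positivity)
  have hcont : ContinuousOn
      (fun y => arcsin (√(a ^ 2 + b ^ 2) * y / (a * √(y ^ 2 + b ^ 2))) / (b * √(a ^ 2 + b ^ 2)))
      (Icc (-a) a) := by
    refine (continuous_arcsin.comp_continuousOn ?_).div_const _
    refine ContinuousOn.div (by fun_prop) (by fun_prop) fun y _ => ?_
    have : 0 < √(y ^ 2 + b ^ 2) := sqrt_pos.2 (by positivity)
    positivity
  have hderiv : ∀ x ∈ Ioo (-a) a, HasDerivAt
      (fun y => arcsin (√(a ^ 2 + b ^ 2) * y / (a * √(y ^ 2 + b ^ 2))) / (b * √(a ^ 2 + b ^ 2)))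
      (1 / ((x ^ 2 + b ^ 2) * √(a ^ 2 - x ^ 2))) x := fun x hx =>
    ((hasDerivAt_arcsin_mul_div_sqrt ha hb hx).div_const _).congr_deriv
      (by rw [div_right_comm, div_self (by positivity)])
  have hpos : ∀ x ∈ Ioo (-a) a, 0 ≤ 1 / ((x ^ 2 + b ^ 2) * √(a ^ 2 - x ^ 2)) := fun x _ => by
    positivity
  refine (integral_eq_sub_of_hasDerivAt_of_nonneg (by linarith) hcont hderiv hpos).imp_right
    fun h => h.trans ?_
  have h₁ : √(a ^ 2 + b ^ 2) * a / (a * √(a ^ 2 + b ^ 2)) = 1 := by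
    field_simp
  have h₂ : √(a ^ 2 + b ^ 2) * -a / (a * √((-a) ^ 2 + b ^ 2)) = -1 := by
    rw [neg_sq]; field_simp
  rw [h₁, h₂, arcsin_one, arcsin_neg_one]
  field_simp
  ring

theorem integral_mul_one_div_sq_add_sq_mul_sqrt_sq_sub_sq {a b : ℝ} (ha : 0 < a) (hb : 0 < b) :
    IntervalIntegrable (fun x => x * (1 / ((x ^ 2 + b ^ 2) * √(a ^ 2 - x ^ 2)))) volume (-a) a ∧
      ∫ x in -a..a, x * (1 / ((x ^ 2 + b ^ 2) * √(a ^ 2 - x ^ 2))) = 0 :=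
  ⟨(integral_one_div_sq_add_sq_mul_sqrt_sq_sub_sq ha hb).1.continuousOn_mul continuousOn_id,
    Function.Odd.intervalIntegral_eq_zero (fun x => by simp only [neg_sq]; ring) a⟩

theorem div_eq_partial_fractions {x s p q : ℝ} (hx : x ^ 2 < 1) (hs : s ≠ 0) (hp : p ≠ 0) :
    2 * (1 - x ^ 3 + x ^ 2 - x) / ((x ^ 2 + 4) * s * p * (1 - x ^ 2) * q) =
      (s * p)⁻¹ * (4 / 5 * (1 / ((1 + x) * q)) + 6 / 5 * (x * (1 / ((x ^ 2 + 2 ^ 2) * q))) -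
        6 / 5 * (1 / ((x ^ 2 + 2 ^ 2) * q))) := by
  have h₁ : 1 + x ≠ 0 := by nlinarith
  have h₂ : 1 - x ^ 2 ≠ 0 := by linarith
  rcases eq_or_ne q 0 with rfl | hq
  · simp
  · field_simp
    ring

theorem total_mass_one :
    (2 / 5 : ℝ) + ∫ x in (-(1 / Real.sqrt 2))..(1 / Real.sqrt 2),
      2 * (1 - x ^ 3 + x ^ 2 - x) /
        ((x ^ 2 + 4) * Real.sqrt 2 * π * (1 - x ^ 2) * Real.sqrt (1 / 2 - x ^ 2)) = 1 := by
  set a : ℝ := 1 / √2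
  have ha : 0 < a := by positivity
  have ha2 : a ^ 2 = 1 / 2 := by rw [div_pow, sq_sqrt zero_le_two, one_pow]
  obtain ⟨hg₁, hI₁⟩ := integral_one_div_add_mul_sqrt_sq_sub_sq ha (c := 1) (by nlinarith)
  obtain ⟨hg₂, hI₂⟩ := integral_one_div_sq_add_sq_mul_sqrt_sq_sub_sq ha two_pos
  obtain ⟨hxg₂, hI₃⟩ := integral_mul_one_div_sq_add_sq_mul_sqrt_sq_sub_sq ha two_pos
  set g₁ : ℝ → ℝ := fun x => 1 / ((1 + x) * √(a ^ 2 - x ^ 2))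
  set g₂ : ℝ → ℝ := fun x => 1 / ((x ^ 2 + 2 ^ 2) * √(a ^ 2 - x ^ 2))
  have hsplit : EqOn (fun x => 2 * (1 - x ^ 3 + x ^ 2 - x) /
        ((x ^ 2 + 4) * √2 * π * (1 - x ^ 2) * √(1 / 2 - x ^ 2)))
      (fun x => (√2 * π)⁻¹ * (4 / 5 * g₁ x + 6 / 5 * (x * g₂ x) - 6 / 5 * g₂ x))
      (uIcc (-a) a) := fun x hx => by
    rw [uIcc_of_le (by linarith)] at hx
    have hx2 : x ^ 2 ≤ a ^ 2 := sq_le_sq' hx.1 hx.2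
    simp only [g₁, g₂, ha2]
    exact div_eq_partial_fractions (by linarith) (sqrt_pos.2 two_pos).ne' pi_ne_zero
  rw [integral_congr hsplit, intervalIntegral.integral_const_mul,
    integral_sub ((hg₁.const_mul _).add (hxg₂.const_mul _)) (hg₂.const_mul _),
    integral_add (hg₁.const_mul _) (hxg₂.const_mul _), intervalIntegral.integral_const_mul,
    intervalIntegral.integral_const_mul, intervalIntegral.integral_const_mul, hI₁, hI₂, hI₃]
  have hs₁ : √(1 ^ 2 - a ^ 2) = a := by
    rw [← sqrt_sq ha.le, ha2]; norm_num
  have hs₂ : √(a ^ 2 + 2 ^ 2) = 3 * a := by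
    rw [← sqrt_sq (by positivity : 0 ≤ 3 * a), mul_pow, ha2]; norm_num
  rw [hs₁, hs₂]
  simp only [a]
  field_simp
  ring
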